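/- (Theorem 3.3 (iii), sufficiency) Assume M(·) ≡ M ∈ ℝ^{n×n} and M̃(·) ≡ M̃ ∈ ℝ^{n×n} are constant, and define inductively A_1 = A, M_1 = M and A_{i+1} = A A_i + M_i, M_{i+1} = M A_i for i ≥ 1. If the finite collection of vectors {(B x, 0) : x ∈ ℝ^m} ∪ {(A_i B x, A_{i−1} B x) : 1 ≤ i ≤ 2n+1, x ∈ ℝ^m} (with A_0 := I_n) spans ℝ^n × ℝ^n (i.e., the block matrix [[B, A_1B, …, A_{2n+1}B],[0, B, …, A_{2n}B]] has rank 2n), then the controlled ODE with memory is memory-type null controllable with kernel M̃. -/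

import Mathlib

/-!
Adjoining `z(t) = ∫₀ᵗ y` turns the memory system into the first-order system
`(y, z)' = 𝒜 (y, z) + ℬ u` with `𝒜 = [[A, M], [1, 0]]` and `ℬ = [[B], [0]]`, and memory-type null
controllability into steering `(y₀, 0)` to `(0, 0)`. Since `𝒜ⁱ⁺¹ ℬ = [[Aᵢ₊₁ B], [Aᵢ B]]`, the rank
condition is Kalman's condition for `(𝒜, ℬ)`, which gives controllability by duality: if a
functional `φ` annihilates every reachable state, the control `s ↦ φ(e^{-s𝒜} ℬ x) x` shows that
`s ↦ φ(e^{-s𝒜} ℬ x)` vanishes on `(0, T)`; differentiating there and letting `s → 0` gives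
`φ(𝒜ᵏ ℬ x) = 0` for all `k`, hence `φ = 0`.
-/

open MeasureTheory Matrix Set

/-- `y` is a solution on `[0,T]` of the controlled ODE with memory
`y'(t) = A y(t) + ∫_0^t M(t-s) y(s) ds + B u(t)`, `y(0) = y₀`,
in the integrated sense. -/
noncomputable def IsCtrlSol (T : ℝ) (n m : ℕ) (A : Matrix (Fin n) (Fin n) ℝ)
    (M : ℝ → Matrix (Fin n) (Fin n) ℝ) (B : Matrix (Fin n) (Fin m) ℝ)
    (u : ℝ → Fin m → ℝ) (y0 : Fin n → ℝ) (y : ℝ → Fin n → ℝ) : Prop :=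
  ContinuousOn y (Set.Icc 0 T) ∧
  ∀ t ∈ Set.Icc 0 T,
    y t = y0 + ∫ s in Set.Ioc 0 t,
      (A *ᵥ y s + (∫ r in Set.Ioc 0 s, (M (s - r)) *ᵥ y r) + B *ᵥ u s)

/-- `w` is a solution on `[0,T]` of the adjoint system
`w'(t) = -Aᵀ w(t) - ∫_t^T M(s-t)ᵀ w(s) ds + M̃(T-t)ᵀ z_T`, `w(T) = w_T`,
in the integrated sense. -/
noncomputable def IsAdjSol (T : ℝ) (n : ℕ) (A : Matrix (Fin n) (Fin n) ℝ)
    (M Mt : ℝ → Matrix (Fin n) (Fin n) ℝ)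
    (wT zT : Fin n → ℝ) (w : ℝ → Fin n → ℝ) : Prop :=
  ContinuousOn w (Set.Icc 0 T) ∧
  ∀ t ∈ Set.Icc 0 T,
    w t = wT + ∫ s in Set.Ioc t T,
      (Aᵀ *ᵥ w s + (∫ r in Set.Ioc s T, (M (r - s))ᵀ *ᵥ w r) - (Mt (T - s))ᵀ *ᵥ zT)

/-- Memory-type null controllability with kernel `Mt`. -/
noncomputable def MemNullCtrl (T : ℝ) (n m : ℕ) (A : Matrix (Fin n) (Fin n) ℝ)
    (M Mt : ℝ → Matrix (Fin n) (Fin n) ℝ) (B : Matrix (Fin n) (Fin m) ℝ) : Prop :=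
  ∀ y0 : Fin n → ℝ, ∃ (u : ℝ → Fin m → ℝ) (y : ℝ → Fin n → ℝ),
    MemLp u 2 (volume.restrict (Set.Ioc 0 T)) ∧
    IsCtrlSol T n m A M B u y0 y ∧
    y T = 0 ∧
    (∫ s in Set.Ioc 0 T, (Mt (T - s)) *ᵥ y s) = 0
/-- The sequences `A_{i+1}`, `M_{i+1}` of the paper for constant kernels: the value at
index `i : ℕ` corresponds to the subscript `i + 1`, so `amcSeq A M 0 = (A₁, M₁) = (A, M)`
and `amcSeq A M (i+1) = (A A_{i+1} + M_{i+1}, M A_{i+1})`. -/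
def amcSeq {n : ℕ} (A M : Matrix (Fin n) (Fin n) ℝ) :
    ℕ → Matrix (Fin n) (Fin n) ℝ × Matrix (Fin n) (Fin n) ℝ
  | 0 => (A, M)
  | i + 1 =>
    let p := amcSeq A M i
    (A * p.1 + p.2, M * p.1)

/-- `AmatC A M i = A_i`, with the convention `A₀ = Iₙ`. -/
def AmatC {n : ℕ} (A M : Matrix (Fin n) (Fin n) ℝ) : ℕ → Matrix (Fin n) (Fin n) ℝ
  | 0 => 1
  | i + 1 => (amcSeq A M i).1

open NormedSpace

section VariationOfConstants

variable {E : Type*} [NormedAddCommGroup E] [NormedSpace ℝ E] [CompleteSpace E]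
  (L : E →L[ℝ] E) {g : ℝ → E} (x₀ : E)

lemma continuous_exp_smul : Continuous fun t : ℝ => exp (t • L) :=
  (differentiable_exp_smul_const ℝ L).continuous

lemma continuous_exp_neg_smul_apply (hg : Continuous g) :
    Continuous fun s : ℝ => exp ((-s) • L) (g s) :=
  ((continuous_exp_smul L).comp continuous_neg).clm_apply hg

lemma exp_smul_apply_exp_neg_smul_apply (t : ℝ) (v : E) :
    exp (t • L) (exp ((-t) • L) v) = v := by
  have hball : ∀ x : E →L[ℝ] E, x ∈ Metric.eball 0 (expSeries ℝ (E →L[ℝ] E)).radius :=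
    fun x => (expSeries_radius_eq_top ℝ (E →L[ℝ] E)).symm ▸ edist_lt_top _ _
  rw [← mul_apply_eq_comp, ← exp_add_of_commute_of_mem_ball
    (((Commute.refl L).smul_left t).smul_right (-t)) (hball _) (hball _), ← add_smul,
    add_neg_cancel, zero_smul, exp_zero, one_apply_eq_self]

variable (g) in
/-- The solution of `x' = L x + g`, `x 0 = x₀`, written as `e^{tL} (x₀ + ∫₀ᵗ e^{-sL} g(s) ds)`
so that it is differentiated by the product rule. -/
noncomputable def variationOfConstants (t : ℝ) : E :=
  exp (t • L) (x₀ + ∫ s in (0)..t, exp ((-s) • L) (g s))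

lemma hasDerivAt_variationOfConstants (hg : Continuous g) (t : ℝ) :
    HasDerivAt (variationOfConstants L g x₀)
      (L (variationOfConstants L g x₀ t) + g t) t := by
  have hinner : HasDerivAt (fun t : ℝ => x₀ + ∫ s in (0)..t, exp ((-s) • L) (g s))
      (exp ((-t) • L) (g t)) t :=
    ((continuous_exp_neg_smul_apply L hg).integral_hasStrictDerivAt 0 t).hasDerivAt.const_add x₀
  have h := (hasDerivAt_exp_smul_const' L t).clm_apply hinner
  rw [exp_smul_apply_exp_neg_smul_apply] at h
  exact h

lemma continuous_variationOfConstants (hg : Continuous g) :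
    Continuous (variationOfConstants L g x₀) :=
  continuous_iff_continuousAt.2 fun t => (hasDerivAt_variationOfConstants L x₀ hg t).continuousAt

lemma variationOfConstants_eq_add_integral (hg : Continuous g) {t : ℝ} (ht : 0 ≤ t) :
    variationOfConstants L g x₀ t =
      x₀ + ∫ s in Ioc 0 t, (L (variationOfConstants L g x₀ s) + g s) := by
  have hcont := continuous_variationOfConstants L x₀ hg
  rw [← intervalIntegral.integral_of_le ht, intervalIntegral.integral_eq_sub_of_hasDerivAt
    (fun s _ => hasDerivAt_variationOfConstants L x₀ hg s)
    (((L.continuous.comp hcont).add hg).intervalIntegrable _ _)]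
  simp [variationOfConstants]

end VariationOfConstants

lemma eqOn_zero_of_intervalIntegral_eq_zero {f : ℝ → ℝ} (hf : Continuous f) (hf₀ : 0 ≤ f)
    {a b : ℝ} (hab : a ≤ b) (h : ∫ s in a..b, f s = 0) : EqOn f 0 (Ioo a b) := by
  rw [intervalIntegral.integral_eq_zero_iff_of_le_of_nonneg_ae hab
    (Filter.Eventually.of_forall hf₀) (hf.intervalIntegrable a b)] at h
  exact Measure.eqOn_open_of_ae_eq (ae_restrict_of_ae_restrict_of_subset Ioo_subset_Ioc_self h)
    isOpen_Ioo hf.continuousOn continuousOn_const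

section Controllability

variable {E F G : Type*} [NormedAddCommGroup E] [NormedSpace ℝ E] [CompleteSpace E]
  [NormedAddCommGroup F] [NormedSpace ℝ F] [NormedAddCommGroup G] [NormedSpace ℝ G]
  (L : E →L[ℝ] E) (B : F →L[ℝ] E)

lemma apply_exp_smul_pow_apply_eq_zero (φ : E →L[ℝ] G) {U : Set ℝ} (hU : IsOpen U) {w : E}
    (hw : ∀ r ∈ U, φ (exp (r • L) w) = 0) (k : ℕ) :
    ∀ r ∈ U, φ (exp (r • L) ((L ^ k) w)) = 0 := by
  induction k generalizing w with
  | zero => simpa using hw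
  | succ k ih =>
    refine ih fun r hr => ?_
    have hexp := (hasDerivAt_exp_smul_const L r).clm_apply (hasDerivAt_const r w)
    rw [map_zero, add_zero] at hexp
    have hderiv : HasDerivAt (fun r : ℝ => φ (exp (r • L) w)) (φ (exp (r • L) (L w))) r :=
      φ.hasFDerivAt.comp_hasDerivAt r hexp
    have hzero : (fun _ : ℝ => (0 : G)) =ᶠ[nhds r] fun r : ℝ => φ (exp (r • L) w) :=
      Filter.eventually_of_mem (hU.mem_nhds hr) fun r hr => (hw r hr).symm
    exact ((hasDerivAt_const r (0 : G)).unique (hderiv.congr_of_eventuallyEq hzero)).symm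

/-- The state reached at time `T` from `0` under the control `u`, pulled back by `e^{-TL}`. -/
noncomputable def inputToState (T : ℝ) : C(ℝ, F) →ₗ[ℝ] E where
  toFun u := ∫ s in (0)..T, exp ((-s) • L) (B (u s))
  map_add' u v := by
    have hcont (w : C(ℝ, F)) := continuous_exp_neg_smul_apply L (B.continuous.comp w.continuous)
    simp only [ContinuousMap.add_apply, map_add]
    exact intervalIntegral.integral_add ((hcont u).intervalIntegrable _ _)
      ((hcont v).intervalIntegrable _ _)
  map_smul' c u := by
    simp only [ContinuousMap.smul_apply, map_smul, RingHom.id_apply]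
    exact intervalIntegral.integral_smul c _

lemma apply_pow_apply_eq_zero_of_forall_apply_inputToState_eq_zero {T : ℝ} (hT : 0 < T)
    (φ : E →L[ℝ] ℝ) (hφ : ∀ u, φ (inputToState L B T u) = 0) (k : ℕ) (x : F) :
    φ ((L ^ k) (B x)) = 0 := by
  set f : ℝ → ℝ := fun s => φ (exp ((-s) • L) (B x))
  have hf : Continuous f := φ.continuous.comp (continuous_exp_neg_smul_apply L continuous_const)
  have hsq : ∫ s in (0)..T, f s * f s = 0 := by
    have hφu := hφ ⟨fun s => f s • x, hf.smul continuous_const⟩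
    rw [inputToState, LinearMap.coe_mk, AddHom.coe_mk, ← φ.intervalIntegral_comp_comm] at hφu
    · simpa [f, mul_comm] using hφu
    · exact (continuous_exp_neg_smul_apply L
        (B.continuous.comp (hf.smul continuous_const))).intervalIntegrable _ _
  have hf₀ : ∀ r ∈ Ioo (-T) 0, φ (exp (r • L) (B x)) = 0 := fun r hr => by
    simpa [f] using eqOn_zero_of_intervalIntegral_eq_zero (hf.mul hf) (fun s => mul_self_nonneg _)
      hT.le hsq ⟨neg_pos.2 hr.2, neg_lt.1 hr.1⟩
  have hclosed : IsClosed {r : ℝ | φ (exp (r • L) ((L ^ k) (B x))) = 0} :=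
    isClosed_eq (φ.continuous.comp ((continuous_exp_smul L).clm_apply continuous_const))
      continuous_const
  have hzero : (0 : ℝ) ∈ closure (Ioo (-T) 0) := by
    rw [closure_Ioo (by linarith)]
    exact right_mem_Icc.2 (by linarith)
  simpa using hclosed.closure_subset_iff.2
    (apply_exp_smul_pow_apply_eq_zero L φ isOpen_Ioo hf₀ k) hzero

theorem inputToState_surjective [FiniteDimensional ℝ E] {T : ℝ} (hT : 0 < T)
    (hspan : Submodule.span ℝ (⋃ k : ℕ, range fun x => (L ^ k) (B x)) = ⊤) :
    Function.Surjective (inputToState L B T) := by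
  rw [← LinearMap.range_eq_top]
  by_contra hne
  obtain ⟨φ, hφ, hle⟩ := (LinearMap.range (inputToState L B T)).exists_le_ker_of_lt_top
    (lt_top_iff_ne_top.2 hne)
  refine hφ (LinearMap.ker_eq_top.1 (top_le_iff.1 (hspan ▸ Submodule.span_le.2 ?_)))
  simp only [iUnion_subset_iff, range_subset_iff]
  intro k x
  exact apply_pow_apply_eq_zero_of_forall_apply_inputToState_eq_zero L B hT
    (LinearMap.toContinuousLinearMap φ) (fun u => hle ⟨u, rfl⟩) k x

end Controllability

section MemorySystem

variable {n m : ℕ} (A M : Matrix (Fin n) (Fin n) ℝ) (B : Matrix (Fin n) (Fin m) ℝ)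

noncomputable def memoryGenerator :
    (Fin n → ℝ) × (Fin n → ℝ) →L[ℝ] (Fin n → ℝ) × (Fin n → ℝ) :=
  LinearMap.toContinuousLinearMap
    ((A.mulVecLin ∘ₗ LinearMap.fst ℝ _ _ + M.mulVecLin ∘ₗ LinearMap.snd ℝ _ _).prod
      (LinearMap.fst ℝ _ _))

noncomputable def memoryInput : (Fin m → ℝ) →L[ℝ] (Fin n → ℝ) × (Fin n → ℝ) :=
  LinearMap.toContinuousLinearMap (LinearMap.inl ℝ _ _ ∘ₗ B.mulVecLin)

@[simp] lemma memoryGenerator_apply (p : (Fin n → ℝ) × (Fin n → ℝ)) :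
    memoryGenerator A M p = (A *ᵥ p.1 + M *ᵥ p.2, p.1) := rfl

@[simp] lemma memoryInput_apply (x : Fin m → ℝ) : memoryInput B x = (B *ᵥ x, 0) := rfl

lemma AmatC_add_two (i : ℕ) :
    AmatC A M (i + 2) = A * AmatC A M (i + 1) + M * AmatC A M i := by
  cases i <;> simp [AmatC, amcSeq]

lemma memoryGenerator_pow_succ_apply (i : ℕ) (v : Fin n → ℝ) :
    (memoryGenerator A M ^ (i + 1)) (v, 0) = (AmatC A M (i + 1) *ᵥ v, AmatC A M i *ᵥ v) := by
  induction i with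
  | zero => simp [AmatC, amcSeq]
  | succ i ih =>
    rw [pow_succ', mul_apply_eq_comp, ih, memoryGenerator_apply, AmatC_add_two, add_mulVec,
      mulVec_mulVec, mulVec_mulVec]

lemma span_memoryGenerator_pow_eq_top
    (hrank : Submodule.span ℝ
      { v : (Fin n → ℝ) × (Fin n → ℝ) |
        (∃ x : Fin m → ℝ, v = (B *ᵥ x, 0)) ∨
        ∃ (i : ℕ) (x : Fin m → ℝ), 1 ≤ i ∧ i ≤ 2 * n + 1 ∧
          v = (AmatC A M i *ᵥ (B *ᵥ x), AmatC A M (i - 1) *ᵥ (B *ᵥ x)) } = ⊤) :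
    Submodule.span ℝ (⋃ k : ℕ, range fun x => (memoryGenerator A M ^ k) (memoryInput B x)) =
      ⊤ := by
  refine top_le_iff.1 (hrank ▸ Submodule.span_mono ?_)
  rintro v (⟨x, rfl⟩ | ⟨i, x, hi, -, rfl⟩)
  · exact mem_iUnion.2 ⟨0, x, rfl⟩
  · obtain ⟨j, rfl⟩ := Nat.exists_eq_add_of_le' hi
    exact mem_iUnion.2 ⟨j + 1, x, memoryGenerator_pow_succ_apply A M j _⟩

end MemorySystem

lemma integral_mulVec {α ι κ : Type*} [MeasurableSpace α] {μ : Measure α} [Fintype ι] [Fintype κ]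
    (N : Matrix ι κ ℝ) {f : α → κ → ℝ} (hf : Integrable f μ) :
    ∫ a, N *ᵥ f a ∂μ = N *ᵥ ∫ a, f a ∂μ :=
  (LinearMap.toContinuousLinearMap N.mulVecLin).integral_comp_comm hf

lemma isCtrlSol_of_augmented {n m : ℕ} {A M : Matrix (Fin n) (Fin n) ℝ}
    {B : Matrix (Fin n) (Fin m) ℝ} {T : ℝ} {u : ℝ → Fin m → ℝ} {y₀ : Fin n → ℝ}
    {X : ℝ → (Fin n → ℝ) × (Fin n → ℝ)} (hu : Continuous u) (hX : Continuous X)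
    (hXeq : ∀ t ∈ Icc 0 T,
      X t = (y₀, 0) + ∫ s in Ioc 0 t, (memoryGenerator A M (X s) + memoryInput B (u s))) :
    IsCtrlSol T n m A (fun _ => M) B u y₀ (fun t => (X t).1) ∧
      ∀ t ∈ Icc 0 T, (X t).2 = ∫ s in Ioc 0 t, (X s).1 := by
  have hint : ∀ t, Integrable (fun s => memoryGenerator A M (X s) + memoryInput B (u s))
      (volume.restrict (Ioc 0 t)) := fun t =>
    (((memoryGenerator A M).continuous.comp hX).add
      ((memoryInput B).continuous.comp hu)).integrableOn_Ioc
  have hmem : ∀ t ∈ Icc 0 T, (X t).2 = ∫ s in Ioc 0 t, (X s).1 := fun t ht => by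
    rw [hXeq t ht, Prod.snd_add, snd_integral (hint t)]
    simp
  refine ⟨⟨hX.fst.continuousOn, fun t ht => ?_⟩, hmem⟩
  change (X t).1 = _
  rw [hXeq t ht, Prod.fst_add, fst_integral (hint t)]
  congr 1
  refine setIntegral_congr_fun measurableSet_Ioc fun s hs => ?_
  simp only [memoryGenerator_apply, memoryInput_apply, Prod.fst_add,
    hmem s ⟨hs.1.le, hs.2.trans ht.2⟩, integral_mulVec M hX.fst.integrableOn_Ioc]

lemma Continuous.memLp_restrict_Ioc {F : Type*} [NormedAddCommGroup F] {f : ℝ → F}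
    (hf : Continuous f) (p : ENNReal) (a b : ℝ) : MemLp f p (volume.restrict (Ioc a b)) := by
  have : IsFiniteMeasure (volume.restrict (Ioc a b)) := ⟨by simp⟩
  obtain ⟨C, hC⟩ := (isCompact_Icc (a := a) (b := b)).exists_bound_of_continuousOn hf.continuousOn
  refine MemLp.of_bound hf.aestronglyMeasurable C ?_
  filter_upwards [ae_restrict_mem measurableSet_Ioc] with x hx
  exact hC x (Ioc_subset_Icc_self hx)

/-- Theorem 3.3 (iii), sufficiency: for constant kernels, the rank
condition `rank [[B, A₁B, …, A_{2n+1}B], [0, B, …, A_{2n}B]] = 2n` implies memory-type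
null controllability with kernel `M̃`. -/
theorem rank_condition_constant_implies_memory_null_controllable
    (T : ℝ) (hT : 0 < T) (n m : ℕ)
    (A M Mt : Matrix (Fin n) (Fin n) ℝ)
    (B : Matrix (Fin n) (Fin m) ℝ)
    (hrank : Submodule.span ℝ
      { v : (Fin n → ℝ) × (Fin n → ℝ) |
        (∃ x : Fin m → ℝ, v = (B *ᵥ x, 0)) ∨
        ∃ (i : ℕ) (x : Fin m → ℝ), 1 ≤ i ∧ i ≤ 2 * n + 1 ∧
          v = (AmatC A M i *ᵥ (B *ᵥ x), AmatC A M (i - 1) *ᵥ (B *ᵥ x)) } = ⊤) :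
    MemNullCtrl T n m A (fun _ => M) (fun _ => Mt) B := by
  intro y₀
  set L := memoryGenerator A M
  obtain ⟨u, hu⟩ := inputToState_surjective L (memoryInput B) hT
    (span_memoryGenerator_pow_eq_top A M B hrank) (-(y₀, 0))
  set g := fun s => memoryInput B (u s)
  have hg : Continuous g := (memoryInput B).continuous.comp u.continuous
  set X := variationOfConstants L g (y₀, 0)
  have hX : Continuous X := continuous_variationOfConstants L (y₀, 0) hg
  have hXT : X T = 0 := by
    change exp (T • L) ((y₀, 0) + inputToState L (memoryInput B) T u) = 0
    rw [hu, add_neg_cancel, map_zero]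
  obtain ⟨hsol, hmem⟩ := isCtrlSol_of_augmented u.continuous hX fun t ht =>
    variationOfConstants_eq_add_integral L (y₀, 0) hg ht.1
  refine ⟨u, fun t => (X t).1, u.continuous.memLp_restrict_Ioc 2 0 T, hsol, by simp [hXT], ?_⟩
  change ∫ s in Ioc 0 T, Mt *ᵥ (X s).1 = 0
  rw [integral_mulVec Mt hX.fst.integrableOn_Ioc]
  simp [← hmem T ⟨hT.le, le_rfl⟩, hXT]
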